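/- arXiv:2008.07517 — 2 statements merged into one kernel-verified Lean document; each statement's English description precedes it below -/
import Mathlib

section
/- Let V be a finite set and let L and L' be generators of irreducible continuous-time Markov chains on V (i.e. L(x,y) ≥ 0 for x ≠ y and each row of L sums to 0, and similarly for L'), reversible with respect to their stationary distributions π and π' respectively. Suppose that for some c ∈ (0,1]: (i) c·π'(x) ≤ π(x) ≤ π'(x)/c for all x ∈ V, and (ii) c·E'(f,f) ≤ E(f,f) ≤ E'(f,f)/c for all f : V → ℝ, where E(f,f) := (1/2)∑_{u,v∈V} π(u)L(u,v)(f(u)−f(v))² and E' is defined analogously with π' and L'. Then the average L² mixing times t_ave := inf{t ≥ 0 : ∑_x π(x) ∑_y (P_t(x,y) − π(y))²/π(y) ≤ 1/4} (with P_t = exp(tL)) and t'_ave (defined analogously with π', L') satisfy c²·t_ave ≤ t'_ave ≤ t_ave/c². In other words, the average L² mixing time is robust under bounded perturbations. -/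
open Finset

variable {V : Type*} [Fintype V] [DecidableEq V]

/-- `L` is the generator of a continuous-time Markov chain: nonnegative off-diagonal
entries and rows summing to zero. -/
def IsGenerator (L : Matrix V V ℝ) : Prop :=
  (∀ x y, x ≠ y → 0 ≤ L x y) ∧ (∀ x, ∑ y, L x y = 0)

/-- Irreducibility of the chain with generator `L`: the directed graph of positive
off-diagonal entries is strongly connected. -/
def IsIrreducibleGen (L : Matrix V V ℝ) : Prop :=
  ∀ x y : V, Relation.ReflTransGen (fun a b => a ≠ b ∧ 0 < L a b) x y

/-- Dirichlet form `E(f,f) = (1/2)∑_{u,v} π(u) L(u,v) (f(u)-f(v))²`. -/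
noncomputable def dirichletForm (L : Matrix V V ℝ) (π : V → ℝ) (f : V → ℝ) : ℝ :=
  (1 / 2) * ∑ u, ∑ v, π u * L u v * (f u - f v) ^ 2

/-- The average `L²` mixing time of the continuous-time chain with generator `L` and
stationary distribution `π`. -/
noncomputable def aveL2MixTime (L : Matrix V V ℝ) (π : V → ℝ) : ℝ :=
  sInf {t : ℝ | 0 ≤ t ∧
    ∑ x, π x * ∑ y, ((NormedSpace.exp (t • L)) x y - π y) ^ 2 / π y ≤ 1 / 4}

/-!
Conjugating `L` by `√π` gives a symmetric matrix `S`, whose exponentials fix the vector `√π`;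
with `λ₀ ≥ λ₁ ≥ ⋯` the eigenvalues of `S`, the average squared `L²` distance at time `t` is
`∑ₖ exp (2 t λₖ) - 1`. The Rayleigh quotient of `S` at `√π f` is `-E(f,f) / ∑ π f²`, so the two
comparison hypotheses bound the Rayleigh quotient of `S'` at `√π' f` by `c²` times that of `S` at
`√π f`, and the Courant–Fischer dimension count turns this into `λ'ₖ ≤ c² λₖ` for every `k`.
Hence the distance of one chain at time `t` is at most that of the other at time `c² t`, and the
times at which the distances fall below `1/4` compare accordingly.
-/

open Matrix Module NormedSpace
open scoped RealInnerProductSpace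

theorem LinearMap.exists_ne_zero_forall_apply_eq_zero {K F ι : Type*} [Field K] [AddCommGroup F]
    [Module K F] [FiniteDimensional K F] [Fintype ι] (hι : Fintype.card ι < finrank K F)
    (φ : ι → F →ₗ[K] K) : ∃ f ≠ 0, ∀ i, φ i f = 0 := by
  have hker : LinearMap.ker (LinearMap.pi φ) ≠ ⊥ :=
    LinearMap.ker_ne_bot_of_finrank_lt (by rwa [Module.finrank_fintype_fun_eq_card])
  obtain ⟨f, hf, hf0⟩ := Submodule.exists_mem_ne_zero_of_ne_bot hker
  exact ⟨f, hf0, fun i => congr_fun (LinearMap.mem_ker.mp hf) i⟩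

namespace LinearMap.IsSymmetric

variable {E : Type*} [NormedAddCommGroup E] [InnerProductSpace ℝ E] [FiniteDimensional ℝ E]
  {T : E →ₗ[ℝ] E} (hT : T.IsSymmetric) {n : ℕ} (hn : finrank ℝ E = n)

theorem inner_map_self_eq_sum_eigenvalues (x : E) :
    ⟪x, T x⟫ = ∑ i, hT.eigenvalues hn i * ⟪hT.eigenvectorBasis hn i, x⟫ ^ 2 := by
  rw [← (hT.eigenvectorBasis hn).sum_inner_mul_inner x (T x)]
  refine sum_congr rfl fun i _ => ?_
  rw [← hT, apply_eigenvectorBasis, real_inner_smul_left, real_inner_comm]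
  simp only [RCLike.ofReal_real_eq_id, id_eq]
  ring

theorem inner_map_self_le_eigenvalues_mul {k : Fin n} {x : E}
    (hx : ∀ j < k, ⟪hT.eigenvectorBasis hn j, x⟫ = 0) :
    ⟪x, T x⟫ ≤ hT.eigenvalues hn k * ‖x‖ ^ 2 := by
  rw [hT.inner_map_self_eq_sum_eigenvalues hn, ← (hT.eigenvectorBasis hn).sum_sq_inner_right,
    mul_sum]
  refine sum_le_sum fun j _ => ?_
  rcases lt_or_ge j k with hjk | hkj
  · simp [hx j hjk]
  · exact mul_le_mul_of_nonneg_right (hT.eigenvalues_antitone hn hkj) (sq_nonneg _)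

theorem eigenvalues_mul_le_inner_map_self {k : Fin n} {x : E}
    (hx : ∀ j, k < j → ⟪hT.eigenvectorBasis hn j, x⟫ = 0) :
    hT.eigenvalues hn k * ‖x‖ ^ 2 ≤ ⟪x, T x⟫ := by
  rw [hT.inner_map_self_eq_sum_eigenvalues hn, ← (hT.eigenvectorBasis hn).sum_sq_inner_right,
    mul_sum]
  refine sum_le_sum fun j _ => ?_
  rcases le_or_gt j k with hjk | hkj
  · exact mul_le_mul_of_nonneg_right (hT.eigenvalues_antitone hn hjk) (sq_nonneg _)
  · simp [hx j hkj]

theorem eigenvalues_le_mul_of_rayleigh_le {F E' : Type*} [AddCommGroup F] [Module ℝ F]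
    [FiniteDimensional ℝ F] [NormedAddCommGroup E'] [InnerProductSpace ℝ E']
    [FiniteDimensional ℝ E'] {T' : E' →ₗ[ℝ] E'} (hT' : T'.IsSymmetric)
    (hn' : finrank ℝ E' = n) (hF : finrank ℝ F = n) {Ψ : F →ₗ[ℝ] E} {Ψ' : F →ₗ[ℝ] E'}
    (hΨ : Function.Injective Ψ) (hΨ' : Function.Injective Ψ') {κ : ℝ} (hκ : 0 ≤ κ)
    (h : ∀ f ≠ 0, ⟪Ψ' f, T' (Ψ' f)⟫ / ‖Ψ' f‖ ^ 2 ≤ κ * (⟪Ψ f, T (Ψ f)⟫ / ‖Ψ f‖ ^ 2))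
    (k : Fin n) : hT'.eigenvalues hn' k ≤ κ * hT.eigenvalues hn k := by
  set b := hT.eigenvectorBasis hn
  set b' := hT'.eigenvectorBasis hn'
  -- `n - 1` linear conditions on `F`, of dimension `n`: `Ψ f` avoids the `k` top eigenvectors
  -- of `T`, and `Ψ' f` the `n - 1 - k` bottom eigenvectors of `T'`
  obtain ⟨f, hf0, hf⟩ := LinearMap.exists_ne_zero_forall_apply_eq_zero
    (ι := {j : Fin n // j ≠ k}) (by simpa [Fintype.card_subtype_compl, hF] using k.pos)
    fun j => if (j : Fin n) < k then (innerₛₗ ℝ (b j)).comp Ψ else (innerₛₗ ℝ (b' j)).comp Ψ'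
  have hlow : ∀ j < k, ⟪b j, Ψ f⟫ = 0 := fun j hj => by
    simpa [hj] using hf ⟨j, hj.ne⟩
  have hhigh : ∀ j, k < j → ⟪b' j, Ψ' f⟫ = 0 := fun j hj => by
    simpa [hj.not_gt] using hf ⟨j, hj.ne'⟩
  have hpos : 0 < ‖Ψ f‖ ^ 2 := by
    have : Ψ f ≠ 0 := fun h0 => hf0 (hΨ (h0.trans Ψ.map_zero.symm))
    positivity
  have hpos' : 0 < ‖Ψ' f‖ ^ 2 := by
    have : Ψ' f ≠ 0 := fun h0 => hf0 (hΨ' (h0.trans Ψ'.map_zero.symm))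
    positivity
  calc hT'.eigenvalues hn' k ≤ ⟪Ψ' f, T' (Ψ' f)⟫ / ‖Ψ' f‖ ^ 2 :=
        (le_div_iff₀ hpos').2 (hT'.eigenvalues_mul_le_inner_map_self hn' hhigh)
    _ ≤ κ * (⟪Ψ f, T (Ψ f)⟫ / ‖Ψ f‖ ^ 2) := h f hf0
    _ ≤ κ * hT.eigenvalues hn k := by
        gcongr
        exact (div_le_iff₀ hpos).2 (hT.inner_map_self_le_eigenvalues_mul hn hlow)

end LinearMap.IsSymmetric

namespace Matrix

variable {ι : Type*} [Fintype ι]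

theorem exp_mulVec_of_mulVec_eq_zero [DecidableEq ι] {A : Matrix ι ι ℝ} {v : ι → ℝ}
    (h : A *ᵥ v = 0) : exp A *ᵥ v = v := by
  have hexp : HasSum (fun n : ℕ => ((n.factorial : ℝ)⁻¹ • A ^ n) *ᵥ v) (exp A *ᵥ v) := by
    open scoped Matrix.Norms.Operator in
    exact (NormedSpace.exp_series_hasSum_exp' (𝕂 := ℝ) A).mapL
      ((mulVecBilin ℝ ℝ).flip v).toContinuousLinearMap
  have hterm : ∀ n ≠ 0, ((n.factorial : ℝ)⁻¹ • A ^ n) *ᵥ v = 0 := by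
    intro n hn
    obtain ⟨m, rfl⟩ := Nat.exists_eq_succ_of_ne_zero hn
    rw [smul_mulVec, pow_succ, ← mulVec_mulVec, h, mulVec_zero, smul_zero]
  simpa using hexp.unique (hasSum_single 0 hterm)

theorem IsHermitian.trace_exp_smul [DecidableEq ι] {A : Matrix ι ι ℝ} (hA : A.IsHermitian)
    (s : ℝ) : (NormedSpace.exp (s • A)).trace = ∑ i, Real.exp (s * hA.eigenvalues i) := by
  set U := (hA.eigenvectorUnitary : Matrix ι ι ℝ)
  have hU : IsUnit U := (Unitary.toUnits hA.eigenvectorUnitary).isUnit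
  have hUinv : U⁻¹ = star U :=
    inv_eq_left_inv (Unitary.star_mul_self_of_mem hA.eigenvectorUnitary.2)
  have hspec : s • A = U * diagonal (fun i => s * hA.eigenvalues i) * U⁻¹ := by
    conv_lhs => rw [hA.spectral_theorem]
    rw [Unitary.conjStarAlgAut_apply, hUinv, ← Matrix.smul_mul, ← Matrix.mul_smul,
      ← diagonal_smul]
    rfl
  simp [hspec, exp_conj _ _ hU, trace_conj hU, exp_diagonal, trace_diagonal, Pi.coe_exp,
    Real.exp_eq_exp_ℝ]

theorem sum_sq_sub_mul_of_mulVec_eq_self {M : Matrix ι ι ℝ} {v : ι → ℝ} (hM : M *ᵥ v = v)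
    (hv : ∑ x, v x ^ 2 = 1) :
    ∑ x, ∑ y, (M x y - v x * v y) ^ 2 = ∑ x, ∑ y, M x y ^ 2 - 1 := by
  have hMv : ∀ x, ∑ y, M x y * v y = v x := fun x => congr_fun hM x
  have hsplit : ∀ x y, (M x y - v x * v y) ^ 2
      = M x y ^ 2 - 2 * v x * (M x y * v y) + v x ^ 2 * v y ^ 2 := fun x y => by ring
  simp only [hsplit, sum_add_distrib, sum_sub_distrib, ← mul_sum, hMv, ← sum_mul, hv,
    mul_assoc, ← sq]
  ring

theorem IsSymm.sum_sq_eq_trace_mul_self {M : Matrix ι ι ℝ} (hM : M.IsSymm) :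
    ∑ x, ∑ y, M x y ^ 2 = (M * M).trace := by
  simp only [trace, diag, mul_apply, sq]
  exact sum_congr rfl fun x _ => sum_congr rfl fun y _ => by rw [hM.apply x y]

end Matrix

section Reversible

variable {ι : Type*} {L : Matrix ι ι ℝ} {π : ι → ℝ}

theorem dirichletForm_nonneg [Fintype ι] (hoff : ∀ x y, x ≠ y → 0 ≤ L x y)
    (hπ : ∀ x, 0 ≤ π x) (f : ι → ℝ) : 0 ≤ dirichletForm L π f := by
  refine mul_nonneg (by norm_num) (sum_nonneg fun x _ => sum_nonneg fun y _ => ?_)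
  rcases eq_or_ne x y with rfl | hxy
  · simp
  · exact mul_nonneg (mul_nonneg (hπ x) (hoff x y hxy)) (sq_nonneg _)

theorem dirichletForm_eq_neg_sum [Fintype ι] (hrow : ∀ x, ∑ y, L x y = 0)
    (hrev : ∀ x y, π x * L x y = π y * L y x) (f : ι → ℝ) :
    dirichletForm L π f = -∑ x, ∑ y, π x * L x y * (f x * f y) := by
  have hx : ∀ x, ∑ y, π x * L x y * f x ^ 2 = 0 := fun x => by
    rw [← sum_mul, ← mul_sum, hrow, mul_zero, zero_mul]
  have hleft : ∑ x, ∑ y, π x * L x y * f x ^ 2 = 0 := sum_eq_zero fun x _ => hx x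
  have hright : ∑ x, ∑ y, π x * L x y * f y ^ 2 = 0 := by
    rw [sum_comm]
    exact sum_eq_zero fun y _ => (sum_congr rfl fun x _ => by rw [hrev]).trans (hx y)
  have hsplit : ∀ x y, π x * L x y * (f x - f y) ^ 2 = π x * L x y * f x ^ 2
      + π x * L x y * f y ^ 2 - 2 * (π x * L x y * (f x * f y)) := fun x y => by ring
  simp only [dirichletForm, hsplit, sum_sub_distrib, sum_add_distrib, hleft, hright, ← mul_sum]
  ring

noncomputable def symmetrizedGenerator (L : Matrix ι ι ℝ) (π : ι → ℝ) : Matrix ι ι ℝ :=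
  of fun x y => √(π x) * L x y / √(π y)

theorem isHermitian_symmetrizedGenerator (hπ : ∀ x, 0 < π x)
    (hrev : ∀ x y, π x * L x y = π y * L y x) : (symmetrizedGenerator L π).IsHermitian := by
  ext x y
  have hx := Real.sqrt_pos.2 (hπ x)
  have hy := Real.sqrt_pos.2 (hπ y)
  simp only [symmetrizedGenerator, conjTranspose_apply, of_apply, star_trivial]
  rw [div_eq_div_iff hx.ne' hy.ne']
  have := hrev y x
  rw [← Real.mul_self_sqrt (hπ x).le, ← Real.mul_self_sqrt (hπ y).le] at this
  linear_combination this

noncomputable def weightedEmbedding (π : ι → ℝ) : (ι → ℝ) →ₗ[ℝ] EuclideanSpace ℝ ι where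
  toFun f := WithLp.toLp 2 fun x => √(π x) * f x
  map_add' f g := by ext x; simp [mul_add]
  map_smul' r f := by ext x; simp [mul_left_comm]

theorem weightedEmbedding_injective (hπ : ∀ x, 0 < π x) :
    Function.Injective (weightedEmbedding π) := by
  intro f g hfg
  funext x
  have := congr_arg (· x) hfg
  simpa [weightedEmbedding, (Real.sqrt_pos.2 (hπ x)).ne'] using this

theorem norm_weightedEmbedding_sq [Fintype ι] (hπ : ∀ x, 0 ≤ π x) (f : ι → ℝ) :
    ‖weightedEmbedding π f‖ ^ 2 = ∑ x, π x * f x ^ 2 := by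
  simp [EuclideanSpace.real_norm_sq_eq, weightedEmbedding, mul_pow, Real.sq_sqrt (hπ _)]

theorem inner_weightedEmbedding_symmetrizedGenerator [Fintype ι] [DecidableEq ι]
    (hπ : ∀ x, 0 < π x) (hrow : ∀ x, ∑ y, L x y = 0) (hrev : ∀ x y, π x * L x y = π y * L y x)
    (f : ι → ℝ) :
    ⟪weightedEmbedding π f,
      toEuclideanLin (symmetrizedGenerator L π) (weightedEmbedding π f)⟫ =
      -dirichletForm L π f := by
  rw [dirichletForm_eq_neg_sum hrow hrev, neg_neg]
  simp only [PiLp.inner_apply, weightedEmbedding, symmetrizedGenerator, LinearMap.coe_mk,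
    AddHom.coe_mk, toLpLin_toLp, toLin'_apply, mulVec, dotProduct, of_apply, RCLike.inner_apply,
    Real.ringHom_apply]
  refine sum_congr rfl fun x _ => ?_
  rw [sum_mul]
  refine sum_congr rfl fun y _ => ?_
  field_simp [(Real.sqrt_pos.2 (hπ y)).ne']
  rw [Real.sq_sqrt (hπ x).le]
  ring

end Reversible

section Exponential

variable {ι : Type*} [Fintype ι] [DecidableEq ι] {L : Matrix ι ι ℝ} {π : ι → ℝ}

theorem exp_smul_symmetrizedGenerator_apply (hπ : ∀ x, 0 < π x) (t : ℝ) (x y : ι) :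
    exp (t • symmetrizedGenerator L π) x y = √(π x) * exp (t • L) x y / √(π y) := by
  have hsqrt : ∀ x, √(π x) ≠ 0 := fun x => (Real.sqrt_pos.2 (hπ x)).ne'
  set D : Matrix ι ι ℝ := diagonal fun x => √(π x)
  have hDinv : D⁻¹ = diagonal fun x => (√(π x))⁻¹ :=
    inv_eq_right_inv (by rw [diagonal_mul_diagonal]; simp [hsqrt])
  have hD : IsUnit D := isUnit_diagonal.2 (Pi.isUnit_iff.2 fun x => (hsqrt x).isUnit)
  have hconj : t • symmetrizedGenerator L π = D * (t • L) * D⁻¹ := by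
    ext x y
    simp only [symmetrizedGenerator, div_eq_mul_inv, Matrix.smul_apply, of_apply, smul_eq_mul,
      Algebra.mul_smul_comm, hDinv, mul_diagonal, diagonal_mul, D]
    ring
  rw [hconj, exp_conj _ _ hD, hDinv, mul_diagonal, diagonal_mul, div_eq_mul_inv]

theorem exp_smul_symmetrizedGenerator_mulVec_sqrt (hπ : ∀ x, 0 < π x)
    (hrow : ∀ x, ∑ y, L x y = 0) (t : ℝ) :
    exp (t • symmetrizedGenerator L π) *ᵥ (fun x => √(π x)) = fun x => √(π x) := by
  have hker : symmetrizedGenerator L π *ᵥ (fun x => √(π x)) = 0 := by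
    ext x
    have hsqrt : ∀ y, √(π x) * L x y / √(π y) * √(π y) = √(π x) * L x y := fun y =>
      div_mul_cancel₀ _ (Real.sqrt_pos.2 (hπ y)).ne'
    simp [mulVec, dotProduct, symmetrizedGenerator, hsqrt, ← mul_sum, hrow]
  exact exp_mulVec_of_mulVec_eq_zero (by rw [smul_mulVec, hker, smul_zero])

noncomputable def aveL2DistSq (L : Matrix ι ι ℝ) (π : ι → ℝ) (t : ℝ) : ℝ :=
  ∑ x, π x * ∑ y, (exp (t • L) x y - π y) ^ 2 / π y

theorem aveL2DistSq_eq_sum_exp_eigenvalues₀ (hπ : ∀ x, 0 < π x) (hπsum : ∑ x, π x = 1)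
    (hrow : ∀ x, ∑ y, L x y = 0) (hrev : ∀ x y, π x * L x y = π y * L y x) (t : ℝ) :
    aveL2DistSq L π t = ∑ k, Real.exp (2 * t *
      (isHermitian_symmetrizedGenerator hπ hrev).eigenvalues₀ k) - 1 := by
  set hS := isHermitian_symmetrizedGenerator hπ hrev
  set K := exp (t • symmetrizedGenerator L π)
  have hentry : ∀ x y, π x * ((exp (t • L) x y - π y) ^ 2 / π y)
      = (K x y - √(π x) * √(π y)) ^ 2 := fun x y => by
    have hy := (Real.sqrt_pos.2 (hπ y)).ne'
    have hy' := (hπ y).ne'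
    rw [show K x y = _ from exp_smul_symmetrizedGenerator_apply hπ t x y]
    field_simp
    rw [Real.sq_sqrt (hπ x).le, Real.sq_sqrt (hπ y).le]
    ring
  have hK : K.IsSymm := ((isHermitian_iff_isSymm.1 hS).smul t).exp
  have hKK : K * K = exp ((2 * t) • symmetrizedGenerator L π) := by
    rw [← exp_add_of_commute _ _ (Commute.refl _), ← add_smul, two_mul]
  calc aveL2DistSq L π t = ∑ x, ∑ y, (K x y - √(π x) * √(π y)) ^ 2 := by
        simp only [aveL2DistSq, mul_sum, hentry]
    _ = ∑ x, ∑ y, K x y ^ 2 - 1 :=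
        sum_sq_sub_mul_of_mulVec_eq_self (exp_smul_symmetrizedGenerator_mulVec_sqrt hπ hrow t)
          (by simp [Real.sq_sqrt (hπ _).le, hπsum])
    _ = ∑ i, Real.exp (2 * t * hS.eigenvalues i) - 1 := by
        rw [hK.sum_sq_eq_trace_mul_self, hKK, hS.trace_exp_smul]
    _ = _ := by
        rw [← Equiv.sum_comp (Fintype.equivOfCardEq (Fintype.card_fin _)).symm]
        rfl

end Exponential

section Comparison

variable {ι : Type*} [Fintype ι] [DecidableEq ι] {L L' : Matrix ι ι ℝ} {π π' : ι → ℝ} {c : ℝ}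

theorem eigenvalues₀_symmetrizedGenerator_le_of_comparison (hoff : ∀ x y, x ≠ y → 0 ≤ L x y)
    (hrow : ∀ x, ∑ y, L x y = 0) (hrow' : ∀ x, ∑ y, L' x y = 0)
    (hπ : ∀ x, 0 < π x) (hπ' : ∀ x, 0 < π' x)
    (hrev : ∀ x y, π x * L x y = π y * L y x) (hrev' : ∀ x y, π' x * L' x y = π' y * L' y x)
    (hc : 0 < c) (hπc : ∀ x, c * π' x ≤ π x)
    (hE : ∀ f, c * dirichletForm L π f ≤ dirichletForm L' π' f) (k : Fin (Fintype.card ι)) :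
    (isHermitian_symmetrizedGenerator hπ' hrev').eigenvalues₀ k ≤
      c ^ 2 * (isHermitian_symmetrizedGenerator hπ hrev).eigenvalues₀ k := by
  refine LinearMap.IsSymmetric.eigenvalues_le_mul_of_rayleigh_le
    (isSymmetric_toEuclideanLin_iff.2 (isHermitian_symmetrizedGenerator hπ hrev))
    finrank_euclideanSpace
    (isSymmetric_toEuclideanLin_iff.2 (isHermitian_symmetrizedGenerator hπ' hrev'))
    finrank_euclideanSpace (Module.finrank_fintype_fun_eq_card ℝ)
    (weightedEmbedding_injective hπ) (weightedEmbedding_injective hπ') (sq_nonneg c)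
    (fun f hf => ?_) k
  have hN : 0 < ∑ x, π x * f x ^ 2 := by
    rw [← norm_weightedEmbedding_sq fun x => (hπ x).le]
    exact pow_pos (norm_pos_iff.2 ((map_ne_zero_iff _ (weightedEmbedding_injective hπ)).2 hf)) 2
  have hN' : 0 < ∑ x, π' x * f x ^ 2 := by
    rw [← norm_weightedEmbedding_sq fun x => (hπ' x).le]
    exact pow_pos (norm_pos_iff.2 ((map_ne_zero_iff _ (weightedEmbedding_injective hπ')).2 hf)) 2
  have hNc : c * ∑ x, π' x * f x ^ 2 ≤ ∑ x, π x * f x ^ 2 := by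
    rw [mul_sum]
    exact sum_le_sum fun x _ => by
      rw [← mul_assoc]; exact mul_le_mul_of_nonneg_right (hπc x) (sq_nonneg _)
  have hE0 := dirichletForm_nonneg hoff (fun x => (hπ x).le) f
  rw [inner_weightedEmbedding_symmetrizedGenerator hπ hrow hrev,
    inner_weightedEmbedding_symmetrizedGenerator hπ' hrow' hrev',
    norm_weightedEmbedding_sq fun x => (hπ x).le, norm_weightedEmbedding_sq fun x => (hπ' x).le,
    mul_div_assoc', div_le_div_iff₀ hN' hN]
  nlinarith [mul_le_mul_of_nonneg_left hNc (mul_nonneg hc.le hE0),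
    mul_le_mul_of_nonneg_right (hE f) hN.le]

theorem aveL2DistSq_le_of_comparison (hoff : ∀ x y, x ≠ y → 0 ≤ L x y)
    (hrow : ∀ x, ∑ y, L x y = 0) (hrow' : ∀ x, ∑ y, L' x y = 0)
    (hπ : ∀ x, 0 < π x) (hπ' : ∀ x, 0 < π' x) (hπsum : ∑ x, π x = 1) (hπ'sum : ∑ x, π' x = 1)
    (hrev : ∀ x y, π x * L x y = π y * L y x) (hrev' : ∀ x y, π' x * L' x y = π' y * L' y x)
    (hc : 0 < c) (hπc : ∀ x, c * π' x ≤ π x)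
    (hE : ∀ f, c * dirichletForm L π f ≤ dirichletForm L' π' f) {t : ℝ} (ht : 0 ≤ t) :
    aveL2DistSq L' π' t ≤ aveL2DistSq L π (c ^ 2 * t) := by
  rw [aveL2DistSq_eq_sum_exp_eigenvalues₀ hπ' hπ'sum hrow' hrev',
    aveL2DistSq_eq_sum_exp_eigenvalues₀ hπ hπsum hrow hrev]
  refine sub_le_sub_right (sum_le_sum fun k _ => Real.exp_le_exp.2 ?_) 1
  have hk := eigenvalues₀_symmetrizedGenerator_le_of_comparison hoff hrow hrow' hπ hπ' hrev hrev'
    hc hπc hE k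
  nlinarith [mul_le_mul_of_nonneg_left hk (by positivity : (0 : ℝ) ≤ 2 * t)]

end Comparison

open scoped Pointwise in
theorem sInf_sublevel_le_div {Q Q' : ℝ → ℝ} {a r : ℝ} (ha : 0 < a)
    (h : ∀ t, 0 ≤ t → Q' t ≤ Q (a * t)) (h' : ∀ t, 0 ≤ t → Q t ≤ Q' (a * t)) :
    sInf {t | 0 ≤ t ∧ Q' t ≤ r} ≤ sInf {t | 0 ≤ t ∧ Q t ≤ r} / a := by
  have hscale : ∀ P P' : ℝ → ℝ, (∀ t, 0 ≤ t → P' t ≤ P (a * t)) →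
      ∀ t, 0 ≤ t ∧ P t ≤ r → 0 ≤ t / a ∧ P' (t / a) ≤ r := fun P P' hP t ht =>
    ⟨div_nonneg ht.1 ha.le,
      (hP _ (div_nonneg ht.1 ha.le)).trans ((mul_div_cancel₀ t ha.ne').symm ▸ ht.2)⟩
  -- the empty case matters because `sInf ∅ = 0`
  rcases Set.eq_empty_or_nonempty {t | 0 ≤ t ∧ Q t ≤ r} with hs | hs
  · have hs' : {t | 0 ≤ t ∧ Q' t ≤ r} = ∅ := Set.eq_empty_of_forall_notMem fun t ht =>
      hs.subset (hscale Q' Q h' t ht)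
    rw [hs, hs', Real.sInf_empty, zero_div]
  · have hsub : a⁻¹ • {t | 0 ≤ t ∧ Q t ≤ r} ⊆ {t | 0 ≤ t ∧ Q' t ≤ r} := by
      rintro _ ⟨t, ht, rfl⟩
      simpa [div_eq_inv_mul] using hscale Q Q' h t ht
    calc sInf {t | 0 ≤ t ∧ Q' t ≤ r} ≤ sInf (a⁻¹ • {t | 0 ≤ t ∧ Q t ≤ r}) :=
          csInf_le_csInf ⟨0, fun t ht => ht.1⟩ hs.smul_set hsub
      _ = sInf {t | 0 ≤ t ∧ Q t ≤ r} / a := by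
          rw [Real.sInf_smul_of_nonneg (inv_nonneg.2 ha.le), smul_eq_mul, div_eq_inv_mul]

theorem aveL2MixTime_robust_general (L L' : Matrix V V ℝ) (π π' : V → ℝ) (c : ℝ)
    (hgen : IsGenerator L) (hgen' : IsGenerator L')
    (hπpos : ∀ x, 0 < π x) (hπsum : ∑ x, π x = 1)
    (hπ'pos : ∀ x, 0 < π' x) (hπ'sum : ∑ x, π' x = 1)
    (hrev : ∀ x y, π x * L x y = π y * L y x)
    (hrev' : ∀ x y, π' x * L' x y = π' y * L' y x)
    (hc0 : 0 < c)
    (hπcomp : ∀ x, c * π' x ≤ π x ∧ π x ≤ π' x / c)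
    (hEcomp : ∀ f : V → ℝ,
      c * dirichletForm L' π' f ≤ dirichletForm L π f ∧
      dirichletForm L π f ≤ dirichletForm L' π' f / c) :
    c ^ 2 * aveL2MixTime L π ≤ aveL2MixTime L' π' ∧
      aveL2MixTime L' π' ≤ aveL2MixTime L π / c ^ 2 := by
  have hπc : ∀ x, c * π x ≤ π' x := fun x => by
    have := (hπcomp x).2; rw [le_div_iff₀ hc0] at this; linarith
  have hEc : ∀ f, c * dirichletForm L π f ≤ dirichletForm L' π' f := fun f => by
    have := (hEcomp f).2; rw [le_div_iff₀ hc0] at this; linarith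
  have hQ' : ∀ t, 0 ≤ t → aveL2DistSq L' π' t ≤ aveL2DistSq L π (c ^ 2 * t) := fun t =>
    aveL2DistSq_le_of_comparison hgen.1 hgen.2 hgen'.2 hπpos hπ'pos hπsum hπ'sum hrev hrev'
      hc0 (fun x => (hπcomp x).1) hEc
  have hQ : ∀ t, 0 ≤ t → aveL2DistSq L π t ≤ aveL2DistSq L' π' (c ^ 2 * t) := fun t =>
    aveL2DistSq_le_of_comparison hgen'.1 hgen'.2 hgen.2 hπ'pos hπpos hπ'sum hπsum hrev' hrev
      hc0 hπc (fun f => (hEcomp f).1)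
  have hc2 : 0 < c ^ 2 := pow_pos hc0 2
  refine ⟨?_, sInf_sublevel_le_div hc2 hQ' hQ⟩
  rw [mul_comm, ← le_div_iff₀ hc2]
  exact sInf_sublevel_le_div hc2 hQ hQ'

/-- Theorem (robustness of the average `L²` mixing time): under a `c`-comparison of the
stationary distributions and of the Dirichlet forms, the average `L²` mixing times are
within a factor `c²` of each other. -/
theorem aveL2MixTime_robust (L L' : Matrix V V ℝ) (π π' : V → ℝ) (c : ℝ)
    (hgen : IsGenerator L) (hgen' : IsGenerator L')
    (hirr : IsIrreducibleGen L) (hirr' : IsIrreducibleGen L')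
    (hπpos : ∀ x, 0 < π x) (hπsum : ∑ x, π x = 1)
    (hπ'pos : ∀ x, 0 < π' x) (hπ'sum : ∑ x, π' x = 1)
    (hrev : ∀ x y, π x * L x y = π y * L y x)
    (hrev' : ∀ x y, π' x * L' x y = π' y * L' y x)
    (hc0 : 0 < c) (hc1 : c ≤ 1)
    (hπcomp : ∀ x, c * π' x ≤ π x ∧ π x ≤ π' x / c)
    (hEcomp : ∀ f : V → ℝ,
      c * dirichletForm L' π' f ≤ dirichletForm L π f ∧
      dirichletForm L π f ≤ dirichletForm L' π' f / c) :
    c ^ 2 * aveL2MixTime L π ≤ aveL2MixTime L' π' ∧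
      aveL2MixTime L' π' ≤ aveL2MixTime L π / c ^ 2 :=
  aveL2MixTime_robust_general L L' π π' c hgen hgen' hπpos hπsum hπ'pos hπ'sum hrev hrev' hc0 hπcomp
    hEcomp
end

section
/- Let T be the infinite rooted binary tree (every vertex has exactly two children), let f : ℕ → ℕ be non-increasing with f(h) ≥ 1 for all h, and let G be the graph obtained from T by replacing each edge between levels h−1 and h of T by a path of f(h) edges (inserting f(h)−1 new vertices of degree 2). Then for every h ≥ 1 and every vertex v of G corresponding to a level-h vertex of T, the probability that the discrete-time simple random walk on G started at v ever visits the root is at most 2^{−h}. -/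
open scoped Classical

/-- Vertices of the stretched infinite binary tree: a tree vertex is a `List Bool` (the root
is `[]`), and the edge from a vertex `c` of level `h = c.length ≥ 1` to its parent is a path
with `f h` edges. The pair `(c, k)` with `0 ≤ k < f h` denotes the point on this path at
distance `k` from `c` (so `(c, 0)` is `c` itself). -/
def StretchVert (f : ℕ → ℕ) (p : List Bool × ℕ) : Prop :=
  p.2 = 0 ∨ (p.1 ≠ [] ∧ p.2 < f p.1.length)

/-- One (oriented) step along the stretched tree: either one step along the path from `c`
towards its parent, or the last step of this path, arriving at the parent. -/
def StretchStep (f : ℕ → ℕ) (p q : List Bool × ℕ) : Prop :=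
  (q.1 = p.1 ∧ q.2 = p.2 + 1 ∧ p.2 + 1 < f p.1.length) ∨
  (∃ b : Bool, p.1 = q.1 ++ [b] ∧ p.2 = f p.1.length - 1 ∧ q.2 = 0)

/-- The stretched infinite binary tree as a simple graph. -/
def stretchGraph (f : ℕ → ℕ) : SimpleGraph {p : List Bool × ℕ // StretchVert f p} where
  Adj x y := StretchStep f x.1 y.1 ∨ StretchStep f y.1 x.1
  symm := ⟨fun x y h => h.symm⟩
  loopless := ⟨by
    rintro ⟨⟨c, k⟩, hv⟩ h
    have : ¬ StretchStep f (c, k) (c, k) := by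
      rintro (⟨-, h2, -⟩ | ⟨b, hb, -, -⟩)
      · exact Nat.succ_ne_self k h2.symm
      · have := congrArg List.length hb
        simp at this
    exact this (h.elim id id)⟩

/-- The root of the stretched tree. -/
def stretchRoot (f : ℕ → ℕ) : {p : List Bool × ℕ // StretchVert f p} :=
  ⟨([], 0), Or.inl rfl⟩

/-- `hitRootSeq f t v` is the probability that simple random walk started at `v` visits the
root within `t` steps; its supremum over `t` is the probability of ever visiting the root. -/
noncomputable def hitRootSeq (f : ℕ → ℕ) :
    ℕ → {p : List Bool × ℕ // StretchVert f p} → ℝ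
  | 0, x => if x = stretchRoot f then 1 else 0
  | t + 1, x =>
    if x = stretchRoot f then 1
    else (∑' y : {y // (stretchGraph f).Adj x y}, hitRootSeq f t y.1) /
      (Nat.card {y // (stretchGraph f).Adj x y} : ℝ)

/-!
The potential `φ (c, k) = 2^{-|c|} (1 + k / f |c|)` interpolates linearly along each stretched
edge between `2^{-h}` at a level-`h` tree vertex and `2^{-(h-1)}` at its parent. It is therefore
harmonic at the interior points of the paths, and at a tree vertex `c ≠ []` its neighbourhood
average is `φ c (1 + (1 / f |c| - 1 / f (|c| + 1)) / 3) ≤ φ c` because `f` is non-increasing.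
Since `φ ≥ 0` and `φ (root) = 1`, induction on `t` bounds the `t`-step hitting probabilities by
`φ`, which equals `2^{-h}` at a level-`h` tree vertex.
-/

theorem SimpleGraph.tsum_adj_div_card_eq {V : Type*} (G : SimpleGraph V) {x : V} {s : Finset V}
    (hs : ∀ y, G.Adj x y ↔ y ∈ s) (g : V → ℝ) :
    (∑' y : {y // G.Adj x y}, g y) / Nat.card {y // G.Adj x y} = (∑ y ∈ s, g y) / s.card := by
  rw [← Finset.tsum_subtype, ← (Equiv.subtypeEquivRight hs).tsum_eq,
    Nat.card_congr (Equiv.subtypeEquivRight hs)]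
  simp

abbrev StretchVertex (f : ℕ → ℕ) := {p : List Bool × ℕ // StretchVert f p}

theorem hitRootSeq_le_of_superharmonic {f : ℕ → ℕ} (g : StretchVertex f → ℝ)
    (hg : 0 ≤ g) (hroot : 1 ≤ g (stretchRoot f))
    (hsuper : ∀ x ≠ stretchRoot f, ∃ s : Finset (StretchVertex f),
      (∀ y, (stretchGraph f).Adj x y ↔ y ∈ s) ∧ (∑ y ∈ s, g y) / s.card ≤ g x) :
    ∀ t x, hitRootSeq f t x ≤ g x := by
  intro t
  induction t with
  | zero =>
    intro x
    rw [hitRootSeq]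
    split_ifs with hx
    · exact hx ▸ hroot
    · exact hg x
  | succ t ih =>
    intro x
    rw [hitRootSeq]
    split_ifs with hx
    · exact hx ▸ hroot
    · obtain ⟨s, hs, hgs⟩ := hsuper x hx
      rw [SimpleGraph.tsum_adj_div_card_eq _ hs]
      exact le_trans (by gcongr with y; exact ih y) hgs

section Neighbours

variable (f : ℕ → ℕ) {c : List Bool} {k : ℕ}

def upVert (c : List Bool) (k : ℕ) (hc : c ≠ []) : StretchVertex f :=
  if h : k + 1 < f c.length then ⟨(c, k + 1), Or.inr ⟨hc, h⟩⟩ else ⟨(c.dropLast, 0), Or.inl rfl⟩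

def downVert (c : List Bool) (k : ℕ) (hv : StretchVert f (c, k)) : StretchVertex f :=
  ⟨(c, k - 1), hv.imp (fun h => show k - 1 = 0 by simp_all)
    fun h => ⟨h.1, show k - 1 < f c.length by have := h.2; dsimp at this; omega⟩⟩

/-- The point of the path from `c ++ [b]` up to `c` that is adjacent to `c`. -/
def childVert (c : List Bool) (b : Bool) : StretchVertex f :=
  ⟨(c ++ [b], f (c ++ [b]).length - 1),
    (Nat.eq_zero_or_pos (f (c ++ [b]).length)).imp (fun h => show _ - 1 = 0 by rw [h])
      fun h => ⟨by simp, show f (c ++ [b]).length - 1 < f (c ++ [b]).length by omega⟩⟩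

variable {f}

theorem upVert_val (hc : c ≠ []) :
    (upVert f c k hc).1 = if k + 1 < f c.length then (c, k + 1) else (c.dropLast, 0) := by
  unfold upVert
  split_ifs <;> rfl

theorem stretchStep_iff_eq_upVert (hc : c ≠ []) (hv : StretchVert f (c, k))
    (y : StretchVertex f) :
    StretchStep f (c, k) y.1 ↔ y = upVert f c k hc := by
  obtain ⟨⟨d, j⟩, hy⟩ := y
  rw [Subtype.ext_iff, upVert_val, StretchStep]
  split_ifs with h
  · simp only [Prod.mk.injEq]
    constructor
    · rintro (⟨h1, h2, -⟩ | ⟨b, -, hk, -⟩)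
      · exact ⟨h1, h2⟩
      · omega
    · rintro ⟨rfl, rfl⟩
      exact Or.inl ⟨rfl, rfl, h⟩
  · simp only [Prod.mk.injEq]
    constructor
    · rintro (⟨-, -, h'⟩ | ⟨b, rfl, -, rfl⟩)
      · exact absurd h' h
      · simp
    · rintro ⟨rfl, rfl⟩
      refine Or.inr ⟨c.getLast hc, (List.dropLast_append_getLast hc).symm, ?_, rfl⟩
      rcases hv with hk | ⟨-, hk⟩ <;> dsimp at * <;> omega

theorem stretchStep_iff_eq_downVert (hv : StretchVert f (c, k)) (hk : 0 < k)
    (y : StretchVertex f) :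
    StretchStep f y.1 (c, k) ↔ y = downVert f c k hv := by
  obtain ⟨⟨d, j⟩, hy⟩ := y
  have hkf := (hv.resolve_left hk.ne').2
  rw [Subtype.ext_iff, StretchStep]
  dsimp only [downVert] at hkf ⊢
  simp only [Prod.mk.injEq]
  constructor
  · rintro (⟨rfl, h2, -⟩ | ⟨-, -, -, h0⟩)
    · exact ⟨rfl, by omega⟩
    · omega
  · rintro ⟨rfl, rfl⟩
    exact Or.inl ⟨rfl, by omega, by omega⟩

theorem stretchStep_iff_eq_childVert (y : StretchVertex f) :
    StretchStep f y.1 (c, 0) ↔ y = childVert f c true ∨ y = childVert f c false := by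
  obtain ⟨⟨d, j⟩, hy⟩ := y
  simp only [Subtype.ext_iff, StretchStep, childVert, Prod.mk.injEq]
  constructor
  · rintro (⟨-, h, -⟩ | ⟨b, rfl, rfl, -⟩)
    · omega
    · cases b <;> simp
  · rintro (⟨rfl, rfl⟩ | ⟨rfl, rfl⟩) <;> exact Or.inr ⟨_, rfl, rfl, trivial⟩

theorem stretchGraph_adj_iff_of_pos (hc : c ≠ []) (hv : StretchVert f (c, k)) (hk : 0 < k)
    (y : StretchVertex f) :
    (stretchGraph f).Adj ⟨(c, k), hv⟩ y ↔
      y ∈ ({upVert f c k hc, downVert f c k hv} : Finset _) := by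
  rw [Finset.mem_insert, Finset.mem_singleton, ← stretchStep_iff_eq_upVert hc hv,
    ← stretchStep_iff_eq_downVert hv hk]
  rfl

theorem stretchGraph_adj_iff_of_zero (hc : c ≠ []) (hv : StretchVert f (c, 0))
    (y : StretchVertex f) :
    (stretchGraph f).Adj ⟨(c, 0), hv⟩ y ↔
      y ∈ ({upVert f c 0 hc, childVert f c true, childVert f c false} : Finset _) := by
  rw [Finset.mem_insert, Finset.mem_insert, Finset.mem_singleton,
    ← stretchStep_iff_eq_upVert hc hv, ← stretchStep_iff_eq_childVert]
  rfl

theorem upVert_ne_downVert (hc : c ≠ []) (hv : StretchVert f (c, k)) :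
    upVert f c k hc ≠ downVert f c k hv := by
  rw [Ne, Subtype.ext_iff, upVert_val]
  split_ifs
  · simp [downVert]
    omega
  · intro h
    have hlen : c.dropLast.length = c.length := congrArg (·.1.length) h
    rw [List.length_dropLast] at hlen
    have := List.length_pos_iff.mpr hc
    omega

theorem upVert_length_le (hc : c ≠ []) : (upVert f c k hc).1.1.length ≤ c.length := by
  rw [upVert_val]
  split_ifs <;> simp

theorem upVert_ne_childVert (hc : c ≠ []) (b : Bool) : upVert f c k hc ≠ childVert f c b := by
  intro h
  have := congrArg (·.1.1.length) h
  have := upVert_length_le (f := f) (k := k) hc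
  simp_all [childVert]

theorem childVert_true_ne_false : childVert f c true ≠ childVert f c false := by
  simp [childVert]

end Neighbours

noncomputable def potential (f : ℕ → ℕ) (x : StretchVertex f) : ℝ :=
  (1 / 2) ^ x.1.1.length * (1 + x.1.2 / f x.1.1.length)

section Potential

variable {f : ℕ → ℕ} {c : List Bool} {k : ℕ}

theorem potential_nonneg (x : StretchVertex f) : 0 ≤ potential f x := by
  unfold potential
  positivity

theorem potential_stretchRoot : potential f (stretchRoot f) = 1 := by
  simp [potential, stretchRoot]

theorem potential_upVert (hc : c ≠ []) (hk : k < f c.length) :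
    potential f (upVert f c k hc) = (1 / 2) ^ c.length * (1 + (k + 1) / f c.length) := by
  rw [potential, upVert_val]
  split_ifs with h
  · push_cast
    ring
  · have hkf : (k : ℝ) + 1 = f c.length := by exact_mod_cast (by omega : k + 1 = f c.length)
    have hlen : c.dropLast.length + 1 = c.length := by
      simp [Nat.sub_add_cancel (List.length_pos_iff.mpr hc)]
    have hf0 : (f c.length : ℝ) ≠ 0 := by
      have : 0 < f c.length := by omega
      positivity
    rw [hkf, div_self hf0, ← hlen, pow_succ]
    simp only [CharP.cast_eq_zero, zero_div, add_zero]
    ring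

theorem potential_downVert (hv : StretchVert f (c, k)) (hk : 0 < k) :
    potential f (downVert f c k hv) = (1 / 2) ^ c.length * (1 + (k - 1) / f c.length) := by
  simp [potential, downVert, Nat.cast_pred hk]

theorem potential_childVert (b : Bool) (hf : 1 ≤ f (c.length + 1)) :
    potential f (childVert f c b) = (1 / 2) ^ c.length * (1 - 1 / (2 * f (c.length + 1))) := by
  simp only [potential, childVert, List.length_append, List.length_singleton]
  rw [Nat.cast_pred hf, pow_succ]
  field_simp
  ring

theorem potential_average_of_pos (hc : c ≠ []) (hv : StretchVert f (c, k)) (hk : 0 < k) :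
    (∑ y ∈ {upVert f c k hc, downVert f c k hv}, potential f y) /
      ({upVert f c k hc, downVert f c k hv} : Finset _).card = potential f ⟨(c, k), hv⟩ := by
  rw [Finset.sum_pair (upVert_ne_downVert hc hv), Finset.card_pair (upVert_ne_downVert hc hv),
    potential_upVert hc (hv.resolve_left hk.ne').2, potential_downVert hv hk, potential]
  push_cast
  ring

theorem potential_average_le_of_zero (hc : c ≠ []) (hv : StretchVert f (c, 0))
    (hf : 1 ≤ f (c.length + 1)) (hmono : f (c.length + 1) ≤ f c.length) :
    (∑ y ∈ {upVert f c 0 hc, childVert f c true, childVert f c false}, potential f y) /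
      ({upVert f c 0 hc, childVert f c true, childVert f c false} : Finset _).card ≤
      potential f ⟨(c, 0), hv⟩ := by
  have hup : upVert f c 0 hc ∉ ({childVert f c true, childVert f c false} : Finset _) := by
    simp [upVert_ne_childVert]
  rw [Finset.sum_insert hup, Finset.sum_pair childVert_true_ne_false,
    Finset.card_insert_of_notMem hup, Finset.card_pair childVert_true_ne_false,
    potential_upVert hc (by omega), potential_childVert _ hf, potential_childVert _ hf, potential]
  have hinv : (1 / 2 : ℝ) ^ c.length * (1 / f c.length) ≤
      (1 / 2) ^ c.length * (1 / f (c.length + 1)) := by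
    gcongr
  have halve : (1 : ℝ) / (2 * f (c.length + 1)) = 1 / f (c.length + 1) / 2 := by ring
  dsimp only
  push_cast
  rw [halve, div_le_iff₀ (by norm_num)]
  simp only [zero_div, zero_add, add_zero]
  linarith

theorem potential_superharmonic (hf1 : ∀ n, 1 ≤ f n) (hmono : Antitone f)
    (x : StretchVertex f) (hx : x ≠ stretchRoot f) :
    ∃ s : Finset (StretchVertex f), (∀ y, (stretchGraph f).Adj x y ↔ y ∈ s) ∧
      (∑ y ∈ s, potential f y) / s.card ≤ potential f x := by
  obtain ⟨⟨c, k⟩, hv⟩ := x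
  have hc : c ≠ [] := by
    rintro rfl
    rcases hv with hk | ⟨h, -⟩
    · exact hx (Subtype.ext (Prod.ext rfl hk))
    · exact h rfl
  rcases Nat.eq_zero_or_pos k with rfl | hk
  · exact ⟨_, stretchGraph_adj_iff_of_zero hc hv,
      potential_average_le_of_zero hc hv (hf1 _) (hmono c.length.le_succ)⟩
  · exact ⟨_, stretchGraph_adj_iff_of_pos hc hv hk, (potential_average_of_pos hc hv hk).le⟩

end Potential

theorem stretched_tree_hitting_root_general (f : ℕ → ℕ) (hf1 : ∀ h, 1 ≤ f h) (hmono : Antitone f)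
    (v : {p : List Bool × ℕ // StretchVert f p}) (h : ℕ)
    (hlev : v.1.1.length = h) (hzero : v.1.2 = 0) :
    (⨆ t : ℕ, hitRootSeq f t v) ≤ (1 / 2 : ℝ) ^ h := by
  have hv : potential f v = (1 / 2) ^ h := by simp [potential, hlev, hzero]
  refine ciSup_le fun t => hv ▸ ?_
  exact hitRootSeq_le_of_superharmonic (potential f) potential_nonneg potential_stretchRoot.ge
    (potential_superharmonic hf1 hmono) t v

/-- Lemma: on the stretched binary tree with non-increasing stretching function `f`, the
random walk started from a level-`h` tree vertex hits the root with probability at most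
`2^{-h}`. -/
theorem stretched_tree_hitting_root (f : ℕ → ℕ) (hf1 : ∀ h, 1 ≤ f h) (hmono : Antitone f)
    (v : {p : List Bool × ℕ // StretchVert f p}) (h : ℕ) (hh : 1 ≤ h)
    (hlev : v.1.1.length = h) (hzero : v.1.2 = 0) :
    (⨆ t : ℕ, hitRootSeq f t v) ≤ (1 / 2 : ℝ) ^ h :=
  stretched_tree_hitting_root_general f hf1 hmono v h hlev hzero
end
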